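/- Let Γ be a finite simple graph and w ∈ W_Γ. Define Link(w) = Link(Λ_w) where Λ_w is the set of letters occurring in a reduced expression for w. Then Link(w) equals the set of vertices u ∈ Γ \ Λ_w such that uw = wu in W_Γ. -/

import Mathlib

def racgRels {V : Type*} (G : SimpleGraph V) : Set (FreeGroup V) :=
  {r | (∃ v, r = FreeGroup.of v * FreeGroup.of v) ∨
    ∃ u v, G.Adj u v ∧ r = FreeGroup.of u * FreeGroup.of v * FreeGroup.of u * FreeGroup.of v}

abbrev RACG {V : Type*} (G : SimpleGraph V) : Type _ := PresentedGroup (racgRels G)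

def racgGen {V : Type*} (G : SimpleGraph V) (v : V) : RACG G := PresentedGroup.of v

def specialSubgroup {V : Type*} (G : SimpleGraph V) (S : Set V) : Subgroup (RACG G) :=
  Subgroup.closure (racgGen G '' S)

def linkSet {V : Type*} (G : SimpleGraph V) (S : Set V) : Set V :=
  {u | ∀ s ∈ S, G.Adj u s}

noncomputable def wordLength {V : Type*} (G : SimpleGraph V) (g : RACG G) : ℕ :=
  sInf {n | ∃ l : List V, l.length = n ∧ (l.map (racgGen G)).prod = g}

lemma racgGen_sq {V : Type*} (G : SimpleGraph V) (v : V) :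
    racgGen G v * racgGen G v = 1 := by
  have h : (QuotientGroup.mk (FreeGroup.of v * FreeGroup.of v) :
      PresentedGroup (racgRels G)) = 1 := by
    rw [QuotientGroup.eq_one_iff]
    exact Subgroup.subset_normalClosure (Or.inl ⟨v, rfl⟩)
  simp only [racgGen, PresentedGroup.of, ← map_mul]
  exact h

lemma racgGen_comm {V : Type*} (G : SimpleGraph V) {u v : V} (h : G.Adj u v) :
    racgGen G u * racgGen G v * racgGen G u * racgGen G v = 1 := by
  have h' : (QuotientGroup.mk (FreeGroup.of u * FreeGroup.of v * FreeGroup.of u * FreeGroup.of v) :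
      PresentedGroup (racgRels G)) = 1 := by
    rw [QuotientGroup.eq_one_iff]
    exact Subgroup.subset_normalClosure (Or.inr ⟨u, v, h, rfl⟩)
  simp only [racgGen, PresentedGroup.of, ← map_mul]
  exact h'

lemma racg_induce_lift {V : Type*} (G : SimpleGraph V) {S : Set V} {H : Type*} [Group H]
    (f : S → H) (hsq : ∀ v : S, f v * f v = 1)
    (hcomm : ∀ u v : S, G.Adj ↑u ↑v → f u * f v * f u * f v = 1) :
    ∀ r ∈ racgRels (G.induce S), FreeGroup.lift f r = 1 := by
  rintro r (⟨v, rfl⟩ | ⟨u, v, hadj, rfl⟩)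
  · simpa [map_mul] using hsq v
  · have h' : G.Adj ↑u ↑v := hadj
    simpa [map_mul] using hcomm u v h'

/-- The canonical homomorphism between special subgroups induced by an inclusion of
vertex sets. -/
def racgMapHom {V : Type*} (G : SimpleGraph V) {S T : Set V} (h : S ⊆ T) :
    RACG (G.induce S) →* RACG (G.induce T) :=
  PresentedGroup.toGroup (f := fun v : S => racgGen (G.induce T) ⟨v.1, h v.2⟩)
    (racg_induce_lift G _
      (fun v => racgGen_sq _ _)
      (fun u v hadj => racgGen_comm (G.induce T) (by exact hadj)))

/-- The canonical homomorphism from the special subgroup on `S` to the full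
right-angled Coxeter group. -/
def racgInclHom {V : Type*} (G : SimpleGraph V) (S : Set V) :
    RACG (G.induce S) →* RACG G :=
  PresentedGroup.toGroup (f := fun v : S => racgGen G ↑v)
    (racg_induce_lift G _
      (fun v => racgGen_sq _ _)
      (fun u v hadj => racgGen_comm G hadj))

/-- The set of letters occurring in some reduced expression of `g`. -/
def lettersOf {V : Type*} (G : SimpleGraph V) (g : RACG G) : Set V :=
  {v | ∃ l : List V, (l.map (racgGen G)).prod = g ∧ l.length = wordLength G g ∧ v ∈ l}


/-!
A vertex adjacent to every letter of `w` commutes with each letter, hence with `w`, and is not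
itself a letter. Conversely, let `u ∉ Λ_w` commute with `w = c w'` (reduced). As `u` is not a
letter, it is not a left descent of `w`, so `u` and `c` are both left descents of
`u w = w u = c w' u`. Two distinct left descents in a right-angled Coxeter group are adjacent:
otherwise they generate an infinite dihedral group `P`, and for `x₀` of minimal length in the
coset `P x` lengths add up, `ℓ (p x₀) = ℓ_P p + ℓ x₀`, so one of the two generators lengthens
`x = p x₀`. Then `u` commutes with `c`, hence with `w'`, and we induct on `w'`.

The exchange condition behind the coset argument comes from Tits' sign representation of `W` on
`W × Bool`; lengths in `P` are read off from its action on `ℤ` by the reflections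
`x ↦ -1 - x` and `x ↦ 1 - x`.
-/

lemma commute_of_mul_self_eq_one {H : Type*} [Group H] {a b : H} (ha : a * a = 1)
    (hb : b * b = 1) (hab : a * b * (a * b) = 1) : Commute a b := by
  have h := eq_inv_of_mul_eq_one_left hab
  rwa [mul_inv_rev, inv_eq_of_mul_eq_one_left ha, inv_eq_of_mul_eq_one_left hb] at h

section ReflectionFlip

variable {W : Type*} [Group W]

lemma conj_eq_iff_of_mul_self_eq_one {t : W} (ht : t * t = 1) {a b : W} :
    t * a * t = b ↔ a = t * b * t := by
  constructor <;> rintro rfl <;> simp [mul_assoc, ← mul_assoc t t, ht]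

variable [DecidableEq W]

def reflectionFlip (t : W) (p : W × Bool) : W × Bool :=
  (t * p.1 * t, xor p.2 (decide (p.1 = t)))

lemma reflectionFlip_involutive {t : W} (ht : t * t = 1) :
    Function.Involutive (reflectionFlip t) := by
  rintro ⟨a, b⟩
  have : t * a * t = t ↔ a = t := by rw [conj_eq_iff_of_mul_self_eq_one ht, ht, one_mul]
  simp only [reflectionFlip, this]
  simp [mul_assoc, ← mul_assoc t t, ht]

lemma reflectionFlip_comm {t t' : W} (ht : t * t = 1) (ht' : t' * t' = 1) (h : Commute t t')
    (p : W × Bool) :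
    reflectionFlip t (reflectionFlip t' p) = reflectionFlip t' (reflectionFlip t p) := by
  obtain ⟨a, b⟩ := p
  have hconj : ∀ {x y : W}, x * x = 1 → Commute x y → x * y * x = y := fun hx hxy => by
    rw [hxy.eq, mul_assoc, hx, mul_one]
  have h₁ : t' * a * t' = t ↔ a = t := by rw [conj_eq_iff_of_mul_self_eq_one ht', hconj ht' h.symm]
  have h₂ : t * a * t = t' ↔ a = t' := by rw [conj_eq_iff_of_mul_self_eq_one ht, hconj ht h]
  simp only [reflectionFlip, h₁, h₂, Bool.xor_right_comm, Prod.mk.injEq, and_true]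
  calc t * (t' * a * t') * t = t * t' * a * (t' * t) := by group
    _ = t' * t * a * (t * t') := by rw [h.eq]
    _ = t' * (t * a * t) * t' := by group

end ReflectionFlip

namespace RACG

variable {V : Type*} (G : SimpleGraph V)

lemma racgGen_inv (v : V) : (racgGen G v)⁻¹ = racgGen G v :=
  inv_eq_of_mul_eq_one_left (racgGen_sq G v)

lemma racgGen_commute {u v : V} (h : G.Adj u v) : Commute (racgGen G u) (racgGen G v) :=
  commute_of_mul_self_eq_one (racgGen_sq G u) (racgGen_sq G v)
    (by simpa only [mul_assoc] using racgGen_comm G h)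

variable {G} {H : Type*} [Group H]

def lift (f : V → H) (hsq : ∀ v, f v * f v = 1)
    (hcomm : ∀ u v, G.Adj u v → Commute (f u) (f v)) : RACG G →* H :=
  PresentedGroup.toGroup (f := f) <| by
    rintro r (⟨v, rfl⟩ | ⟨u, v, huv, rfl⟩)
    · simpa using hsq v
    · simp [(hcomm u v huv).eq, mul_assoc, ← mul_assoc (f u), hsq]

@[simp] lemma lift_racgGen (f : V → H) (hsq : ∀ v, f v * f v = 1)
    (hcomm : ∀ u v, G.Adj u v → Commute (f u) (f v)) (v : V) :
    lift f hsq hcomm (racgGen G v) = f v :=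
  PresentedGroup.toGroup.of _

lemma hom_ext {φ ψ : RACG G →* H} (h : ∀ v, φ (racgGen G v) = ψ (racgGen G v)) : φ = ψ :=
  PresentedGroup.ext h

variable (G)

open Classical in
/-- The entry `0` stands for `m(u, v) = ∞`. -/
noncomputable def coxeterMatrix : CoxeterMatrix V where
  M := Matrix.of fun u v => if u = v then 1 else if G.Adj u v then 2 else 0
  isSymm := Matrix.IsSymm.ext fun u v => by
    simp only [Matrix.of_apply, eq_comm (a := u), G.adj_comm]
  diagonal u := by simp
  off_diagonal u v huv := by simp only [Matrix.of_apply, if_neg huv]; split_ifs <;> simp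

open Classical in
lemma coxeterMatrix_apply (u v : V) :
    coxeterMatrix G u v = if u = v then 1 else if G.Adj u v then 2 else 0 :=
  rfl

lemma isLiftable_coxeterMatrix {f : V → H} (hsq : ∀ v, f v * f v = 1)
    (hcomm : ∀ u v, G.Adj u v → Commute (f u) (f v)) :
    (coxeterMatrix G).IsLiftable f := by
  intro u v
  rw [coxeterMatrix_apply]
  split_ifs with huv hadj
  · subst huv; simpa using hsq u
  · rw [pow_two, mul_assoc, ← mul_assoc (f v), ← (hcomm u v hadj).eq, mul_assoc (f u), hsq,
      mul_one, hsq]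
  · exact pow_zero _

noncomputable def coxeterSystem : CoxeterSystem (coxeterMatrix G) (RACG G) where
  mulEquiv := MonoidHom.toMulEquiv
    (lift (coxeterMatrix G).toCoxeterSystem.simple
      (coxeterMatrix G).toCoxeterSystem.simple_mul_simple_self
      fun u v huv => commute_of_mul_self_eq_one
        ((coxeterMatrix G).toCoxeterSystem.simple_mul_simple_self u)
        ((coxeterMatrix G).toCoxeterSystem.simple_mul_simple_self v) (by
          simpa [coxeterMatrix_apply, G.ne_of_adj huv, huv, pow_two] using
            (coxeterMatrix G).toCoxeterSystem.simple_mul_simple_pow u v))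
    ((coxeterMatrix G).toCoxeterSystem.lift
      ⟨racgGen G, isLiftable_coxeterMatrix G (racgGen_sq G) fun _ _ => racgGen_commute G⟩)
    (hom_ext fun v => by
      rw [MonoidHom.comp_apply, lift_racgGen, CoxeterSystem.lift_apply_simple]
      rfl)
    ((coxeterMatrix G).toCoxeterSystem.ext_simple fun v => by
      rw [MonoidHom.comp_apply, CoxeterSystem.lift_apply_simple, lift_racgGen]
      rfl)

local notation "cs" => coxeterSystem G
local notation "ℓ" => CoxeterSystem.length (coxeterSystem G)
local notation "π" => CoxeterSystem.wordProd (coxeterSystem G)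

@[simp] lemma coxeterSystem_simple (v : V) : (cs).simple v = racgGen G v :=
  (coxeterMatrix G).toCoxeterSystem.lift_apply_simple
    (isLiftable_coxeterMatrix G (racgGen_sq G) fun _ _ => racgGen_commute G) v

lemma coxeterSystem_wordProd (ω : List V) : π ω = (ω.map (racgGen G)).prod := by
  simp only [CoxeterSystem.wordProd, funext (coxeterSystem_simple G)]

@[simp] lemma coxeterSystem_wordProd_cons (v : V) (ω : List V) :
    π (v :: ω) = racgGen G v * π ω := by
  rw [CoxeterSystem.wordProd_cons, coxeterSystem_simple]

lemma wordLength_eq_length (w : RACG G) : wordLength G w = ℓ w := by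
  obtain ⟨ω, hω, rfl⟩ := (cs).exists_isReduced w
  apply le_antisymm
  · exact Nat.sInf_le ⟨ω, hω.symm, (coxeterSystem_wordProd G ω).symm⟩
  · refine le_csInf ⟨ω.length, ω, rfl, (coxeterSystem_wordProd G ω).symm⟩ ?_
    rintro n ⟨l, rfl, hl⟩
    rw [← coxeterSystem_wordProd] at hl
    exact hl ▸ (cs).length_wordProd_le l

lemma mem_lettersOf_iff {w : RACG G} {v : V} :
    v ∈ lettersOf G w ↔ ∃ ω, (cs).IsReduced ω ∧ π ω = w ∧ v ∈ ω := by
  simp only [lettersOf, Set.mem_ofPred_eq, wordLength_eq_length, ← coxeterSystem_wordProd,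
    CoxeterSystem.IsReduced]
  constructor
  · rintro ⟨ω, rfl, hω, hv⟩
    exact ⟨ω, hω.symm, rfl, hv⟩
  · rintro ⟨ω, hω, rfl, hv⟩
    exact ⟨ω, rfl, hω.symm, hv⟩

open Classical in
noncomputable def signRep : RACG G →* Equiv.Perm (RACG G × Bool) :=
  lift (fun v => (reflectionFlip_involutive (racgGen_sq G v)).toPerm)
    (fun v => Equiv.ext (reflectionFlip_involutive (racgGen_sq G v)))
    (fun _ _ huv => show Commute _ _ from Equiv.ext
      (reflectionFlip_comm (racgGen_sq G _) (racgGen_sq G _) (racgGen_commute G huv)))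

open Classical in
lemma signRep_racgGen_apply (v : V) (p : RACG G × Bool) :
    signRep G (racgGen G v) p = reflectionFlip (racgGen G v) p := by
  rw [signRep, lift_racgGen]
  rfl

noncomputable def signCocycle (w t : RACG G) : Bool := (signRep G w (t, false)).2

lemma signRep_apply (w t : RACG G) (b : Bool) :
    signRep G w (t, b) = (w * t * w⁻¹, xor b (signCocycle G w t)) := by
  classical
  induction w using (cs).simple_induction_left generalizing t b with
  | one => simp [signCocycle]
  | mul_simple_left w v ih =>
    have key : ∀ b, signRep G (racgGen G v * w) (t, b)
        = reflectionFlip (racgGen G v) (w * t * w⁻¹, xor b (signCocycle G w t)) := fun b => by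
      rw [map_mul, Equiv.Perm.mul_apply, ih, signRep_racgGen_apply]
    rw [coxeterSystem_simple, signCocycle, key, key]
    simp [reflectionFlip, mul_assoc, racgGen_inv]

lemma signCocycle_mul (w v t : RACG G) :
    signCocycle G (w * v) t = xor (signCocycle G v t) (signCocycle G w (v * t * v⁻¹)) := by
  have h := signRep_apply G (w * v) t false
  rw [map_mul, Equiv.Perm.mul_apply, signRep_apply, signRep_apply] at h
  simpa using (congrArg Prod.snd h).symm

open Classical in
lemma signCocycle_racgGen (v : V) (t : RACG G) :
    signCocycle G (racgGen G v) t = decide (t = racgGen G v) := by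
  simp [signCocycle, signRep_racgGen_apply, reflectionFlip]

lemma mem_rightInvSeq_of_signCocycle {ω : List V} {t : RACG G}
    (h : signCocycle G (π ω) t = true) : t ∈ (cs).rightInvSeq ω := by
  classical
  induction ω with
  | nil => simp [signCocycle] at h
  | cons v ω ih =>
    rw [coxeterSystem_wordProd_cons, signCocycle_mul, signCocycle_racgGen] at h
    rw [CoxeterSystem.rightInvSeq, List.mem_cons, coxeterSystem_simple]
    by_cases ht : signCocycle G (π ω) t = true
    · exact Or.inr (ih ht)
    · left
      simp only [ht, decide_eq_true_eq, Bool.false_xor] at h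
      simp [← h, mul_assoc]

/-- The exchange condition (for arbitrary, not necessarily reduced, words). -/
theorem exists_eraseIdx_of_isLeftDescent {ω : List V} {k : V}
    (hk : (cs).IsLeftDescent (π ω) k) :
    ∃ j < ω.length, racgGen G k * π ω = π (ω.eraseIdx j) := by
  classical
  set y := π ω
  -- `t` is the reflection with `y * t = racgGen k * y`; the cocycle places it in `ris ω`.
  set t := y⁻¹ * racgGen G k * y
  have hyt : y * t = racgGen G k * y := by simp [t, ← mul_assoc]
  have hky : signCocycle G (racgGen G k * y) t = false := by
    by_contra h
    obtain ⟨τ, hτ, hτy⟩ := (cs).exists_isReduced (racgGen G k * y)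
    rw [Bool.not_eq_false, hτy] at h
    have hlt := ((cs).isRightInversion_of_mem_rightInvSeq hτ
      (mem_rightInvSeq_of_signCocycle G h)).2
    rw [← hτy, mul_assoc, hyt, ← mul_assoc, racgGen_sq, one_mul] at hlt
    exact lt_asymm hk hlt
  have hy : signCocycle G y t = true := by
    have h := signCocycle_mul G (racgGen G k) (racgGen G k * y) t
    rw [← mul_assoc, racgGen_sq, one_mul, hky, signCocycle_racgGen] at h
    simpa [t, mul_assoc, racgGen_inv, racgGen_sq] using h
  obtain ⟨j, hj, hjt⟩ := List.mem_iff_getElem.mp (mem_rightInvSeq_of_signCocycle G hy)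
  refine ⟨j, by simpa using hj, ?_⟩
  rw [← hyt, ← (cs).wordProd_mul_getD_rightInvSeq, List.getD_eq_getElem _ _ hj, hjt]

lemma wordProd_mem_specialSubgroup {S : Set V} {ω : List V} (hω : ∀ v ∈ ω, v ∈ S) :
    π ω ∈ specialSubgroup G S := by
  rw [coxeterSystem_wordProd]
  refine list_prod_mem fun g hg => ?_
  obtain ⟨v, hv, rfl⟩ := List.mem_map.mp hg
  exact Subgroup.subset_closure ⟨v, hω v hv, rfl⟩

section Dihedral

variable {G} {i j : V}

open Classical in
noncomputable def dihedralGen (i j v : V) : Equiv.Perm ℤ :=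
  if v = i then Equiv.subLeft (-1) else if v = j then Equiv.subLeft 1 else 1

lemma dihedralGen_mul_self (v : V) : dihedralGen i j v * dihedralGen i j v = 1 := by
  unfold dihedralGen
  split_ifs <;> ext <;> simp

lemma dihedralGen_commute (hij : ¬ G.Adj i j) {u v : V} (huv : G.Adj u v) :
    Commute (dihedralGen i j u) (dihedralGen i j v) := by
  unfold dihedralGen
  split_ifs <;> subst_vars <;> first
    | exact Commute.one_left _ | exact Commute.one_right _ | exact Commute.refl _
    | exact absurd huv hij | exact absurd huv.symm hij

variable (hij : ¬ G.Adj i j)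

noncomputable def dihedralRep : RACG G →* Equiv.Perm ℤ :=
  lift (dihedralGen i j) dihedralGen_mul_self fun _ _ => dihedralGen_commute hij

noncomputable def dihedralPos (w : RACG G) : ℤ := dihedralRep hij w 0

lemma dihedralPos_racgGen_mul (v : V) (w : RACG G) :
    dihedralPos hij (racgGen G v * w) = dihedralGen i j v (dihedralPos hij w) := by
  simp [dihedralPos, dihedralRep]

lemma natAbs_dihedralPos_wordProd_le (ω : List V) :
    (dihedralPos hij (π ω)).natAbs ≤ ω.length := by
  induction ω with
  | nil => simp [dihedralPos]
  | cons v ω ih =>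
    rw [coxeterSystem_wordProd_cons, dihedralPos_racgGen_mul, dihedralGen]
    split_ifs <;> simp <;> omega

def IsDihedralGeodesic (ω : List V) : Prop :=
  (∀ v ∈ ω, v = i ∨ v = j) ∧ (dihedralPos hij (π ω)).natAbs = ω.length

lemma IsDihedralGeodesic.of_cons {v : V} {ω : List V} (h : IsDihedralGeodesic hij (v :: ω)) :
    IsDihedralGeodesic hij ω ∧ (v = i → dihedralPos hij (π (v :: ω)) < 0) ∧
      (v ≠ i → 0 < dihedralPos hij (π (v :: ω))) := by
  obtain ⟨hletters, hlen⟩ := h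
  have hle := natAbs_dihedralPos_wordProd_le hij ω
  have htail : ∀ u ∈ ω, u = i ∨ u = j := fun u hu => hletters u (List.mem_cons_of_mem v hu)
  rw [coxeterSystem_wordProd_cons, dihedralPos_racgGen_mul, dihedralGen] at hlen ⊢
  by_cases hvi : v = i
  · simp only [hvi, if_true, Equiv.subLeft_apply, List.length_cons] at hlen ⊢
    exact ⟨⟨htail, by omega⟩, fun _ => by omega, fun h => absurd rfl h⟩
  · have hvj : v = j := (hletters v List.mem_cons_self).resolve_left hvi
    simp only [if_neg hvi, if_pos hvj, Equiv.subLeft_apply, List.length_cons] at hlen ⊢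
    exact ⟨⟨htail, by omega⟩, fun h => absurd h hvi, fun _ => by omega⟩

lemma IsDihedralGeodesic.cons_iff {ω : List V} (hω : IsDihedralGeodesic hij ω) {k : V}
    (hk : k = i ∨ k = j) :
    IsDihedralGeodesic hij (k :: ω) ↔
      (k = i → 0 ≤ dihedralPos hij (π ω)) ∧ (k ≠ i → dihedralPos hij (π ω) ≤ 0) := by
  obtain ⟨hletters, hlen⟩ := hω
  have hletters' : ∀ v ∈ k :: ω, v = i ∨ v = j := by
    simpa only [List.mem_cons, forall_eq_or_imp] using ⟨hk, hletters⟩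
  rw [IsDihedralGeodesic, and_iff_right hletters']
  simp only [coxeterSystem_wordProd_cons, dihedralPos_racgGen_mul, dihedralGen, List.length_cons]
  by_cases hki : k = i
  · simp only [hki, if_true, Equiv.subLeft_apply, ne_eq, not_true_eq_false, IsEmpty.forall_iff,
      and_true, forall_const]
    omega
  · simp only [hki, if_false, if_pos (hk.resolve_left hki), Equiv.subLeft_apply,
      IsEmpty.forall_iff, true_and, ne_eq, not_false_eq_true, forall_const]
    omega

lemma IsDihedralGeodesic.exists_cons (hne : i ≠ j) {ω : List V}
    (hω : IsDihedralGeodesic hij ω) : ∃ k, (k = i ∨ k = j) ∧ IsDihedralGeodesic hij (k :: ω) := by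
  by_cases hpos : 0 ≤ dihedralPos hij (π ω)
  · exact ⟨i, Or.inl rfl, (hω.cons_iff hij (Or.inl rfl)).2 ⟨fun _ => hpos, fun h => absurd rfl h⟩⟩
  · exact ⟨j, Or.inr rfl, (hω.cons_iff hij (Or.inr rfl)).2
      ⟨fun h => absurd h.symm hne, fun _ => by omega⟩⟩

lemma IsDihedralGeodesic.exists_racgGen_mul {ω : List V} (hω : IsDihedralGeodesic hij ω)
    {k : V} (hk : k = i ∨ k = j) :
    ∃ ω', IsDihedralGeodesic hij ω' ∧ π ω' = racgGen G k * π ω := by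
  by_cases hgrow : IsDihedralGeodesic hij (k :: ω)
  · exact ⟨k :: ω, hgrow, by rw [coxeterSystem_wordProd_cons]⟩
  rw [hω.cons_iff hij hk] at hgrow
  obtain _ | ⟨v, ω'⟩ := ω
  · simp [dihedralPos] at hgrow
  obtain ⟨hω', hvi, hvni⟩ := hω.of_cons hij
  have hvk : v = k := by
    by_cases hki : k = i <;> by_cases hv : v = i
    · rw [hv, hki]
    · exact absurd ⟨fun _ => (hvni hv).le, fun h => absurd hki h⟩ hgrow
    · exact absurd ⟨fun h => absurd h hki, fun _ => (hvi hv).le⟩ hgrow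
    · rw [(hω.1 v List.mem_cons_self).resolve_left hv, hk.resolve_left hki]
  refine ⟨ω', hω', ?_⟩
  rw [coxeterSystem_wordProd_cons, hvk, ← mul_assoc, racgGen_sq, one_mul]

lemma exists_isDihedralGeodesic_of_mem {q : RACG G} (hq : q ∈ specialSubgroup G {i, j}) :
    ∃ ω, IsDihedralGeodesic hij ω ∧ π ω = q := by
  induction hq using Subgroup.closure_induction_left with
  | one => exact ⟨[], ⟨by simp, by simp [dihedralPos]⟩, rfl⟩
  | mul_left _ hk _ _ ih =>
    obtain ⟨k, hk, rfl⟩ := hk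
    obtain ⟨ω, hω, rfl⟩ := ih
    exact hω.exists_racgGen_mul hij hk
  | inv_mul_cancel _ hk _ _ ih =>
    obtain ⟨k, hk, rfl⟩ := hk
    obtain ⟨ω, hω, rfl⟩ := ih
    rw [racgGen_inv]
    exact hω.exists_racgGen_mul hij hk

lemma not_isLeftDescent_wordProd_mul {x₀ : RACG G}
    (hmin : ∀ p ∈ specialSubgroup G {i, j}, ℓ x₀ ≤ ℓ (p * x₀)) {k : V} {ω : List V}
    (hkω : IsDihedralGeodesic hij (k :: ω)) : ¬ (cs).IsLeftDescent (π ω * x₀) k := by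
  intro hdesc
  obtain ⟨ω₀, hω₀, rfl⟩ := (cs).exists_isReduced x₀
  rw [← (cs).wordProd_append] at hdesc
  obtain ⟨p, hp, hdel⟩ := exists_eraseIdx_of_isLeftDescent G hdesc
  have hletters : ∀ v ∈ k :: ω, v ∈ ({i, j} : Set V) := by simpa using hkω.1
  by_cases hpω : p < ω.length
  · rw [List.eraseIdx_append_of_lt_length hpω, (cs).wordProd_append, (cs).wordProd_append,
      ← mul_assoc] at hdel
    have hle := natAbs_dihedralPos_wordProd_le hij (ω.eraseIdx p)
    rw [← mul_right_cancel hdel, ← coxeterSystem_wordProd_cons, hkω.2,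
      List.length_eraseIdx_of_lt hpω, List.length_cons] at hle
    omega
  · rw [List.length_append] at hp
    rw [List.eraseIdx_append_of_length_le (not_lt.mp hpω), (cs).wordProd_append,
      (cs).wordProd_append] at hdel
    have hconj : (π ω)⁻¹ * racgGen G k * π ω * π ω₀ = π (ω₀.eraseIdx (p - ω.length)) := by
      rw [mul_assoc, mul_assoc, hdel, inv_mul_cancel_left]
    have hmem : (π ω)⁻¹ * racgGen G k * π ω ∈ specialSubgroup G {i, j} := by
      have hω : π ω ∈ specialSubgroup G {i, j} :=
        wordProd_mem_specialSubgroup G fun v hv => hletters v (List.mem_cons_of_mem k hv)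
      exact mul_mem (mul_mem (inv_mem hω)
        (Subgroup.subset_closure ⟨k, hletters k List.mem_cons_self, rfl⟩)) hω
    have hshort := (cs).length_wordProd_le (ω₀.eraseIdx (p - ω.length))
    rw [List.length_eraseIdx_of_lt (by omega), ← hconj] at hshort
    have := hmin _ hmem
    rw [hω₀.eq] at this
    omega

lemma length_wordProd_mul_of_isDihedralGeodesic {x₀ : RACG G}
    (hmin : ∀ p ∈ specialSubgroup G {i, j}, ℓ x₀ ≤ ℓ (p * x₀)) {ω : List V}
    (hω : IsDihedralGeodesic hij ω) : ℓ (π ω * x₀) = ω.length + ℓ x₀ := by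
  induction ω with
  | nil => simp
  | cons k ω ih =>
    have hlen := ih (hω.of_cons hij).1
    have hstep := (cs).not_isLeftDescent_iff.mp (not_isLeftDescent_wordProd_mul hij hmin hω)
    rw [coxeterSystem_simple, hlen] at hstep
    rw [coxeterSystem_wordProd_cons, mul_assoc, hstep, List.length_cons]
    ring

end Dihedral

theorem adj_of_isLeftDescent {i j : V} (hne : i ≠ j) {x : RACG G}
    (hi : (cs).IsLeftDescent x i) (hj : (cs).IsLeftDescent x j) : G.Adj i j := by
  by_contra hij
  set P := specialSubgroup G {i, j}
  obtain ⟨q, hqP, hmin⟩ : ∃ q ∈ P, ∀ p ∈ P, ℓ (q * x) ≤ ℓ (p * x) :=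
    ⟨_, Function.argminOn_mem _ _ ⟨1, one_mem P⟩,
      fun p hp => Function.argminOn_le (fun p => ℓ (p * x)) _ hp⟩
  have hmin' : ∀ p ∈ P, ℓ (q * x) ≤ ℓ (p * (q * x)) := fun p hp => by
    rw [← mul_assoc]
    exact hmin _ (mul_mem hp hqP)
  obtain ⟨ω, hω, hωq⟩ := exists_isDihedralGeodesic_of_mem hij (inv_mem hqP)
  have hx : π ω * (q * x) = x := by rw [hωq, inv_mul_cancel_left]
  obtain ⟨k, hk, hkω⟩ := hω.exists_cons hij hne
  have hlen := length_wordProd_mul_of_isDihedralGeodesic hij hmin' hω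
  have hlen' := length_wordProd_mul_of_isDihedralGeodesic hij hmin' hkω
  rw [hx] at hlen
  rw [coxeterSystem_wordProd_cons, mul_assoc, hx, List.length_cons] at hlen'
  have hk : (cs).IsLeftDescent x k := by rcases hk with rfl | rfl <;> assumption
  rw [CoxeterSystem.IsLeftDescent, coxeterSystem_simple] at hk
  omega

lemma isReduced_cons_iff {v : V} {ω : List V} :
    (cs).IsReduced (v :: ω) ↔ ℓ (racgGen G v * π ω) = ω.length + 1 := by
  rw [CoxeterSystem.IsReduced, coxeterSystem_wordProd_cons, List.length_cons]

lemma mem_lettersOf_of_isLeftDescent {w : RACG G} {u : V} (hu : (cs).IsLeftDescent w u) :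
    u ∈ lettersOf G w := by
  obtain ⟨τ, hτ, hτw⟩ := (cs).exists_isReduced (racgGen G u * w)
  have hw : racgGen G u * π τ = w := by rw [← hτw, ← mul_assoc, racgGen_sq, one_mul]
  rw [CoxeterSystem.isLeftDescent_iff, coxeterSystem_simple, hτw, hτ.eq] at hu
  exact (mem_lettersOf_iff G).mpr ⟨u :: τ, (isReduced_cons_iff G).mpr (by rw [hw, hu]),
    by rw [coxeterSystem_wordProd_cons, hw], List.mem_cons_self⟩

lemma adj_of_commute_of_not_mem_lettersOf {c u : V} {ω : List V}
    (hred : (cs).IsReduced (c :: ω)) (hu : u ∉ lettersOf G (π (c :: ω)))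
    (hcomm : Commute (racgGen G u) (π (c :: ω))) :
    G.Adj u c ∧ u ∉ lettersOf G (π ω) ∧ Commute (racgGen G u) (π ω) := by
  have hω : (cs).IsReduced ω := by simpa using hred.drop 1
  have hne : u ≠ c := by
    rintro rfl
    exact hu ((mem_lettersOf_iff G).mpr ⟨_, hred, rfl, List.mem_cons_self⟩)
  have hup := (cs).not_isLeftDescent_iff.mp (mt (mem_lettersOf_of_isLeftDescent G) hu)
  rw [isReduced_cons_iff] at hred
  rw [coxeterSystem_wordProd_cons] at hu hcomm hup
  rw [coxeterSystem_simple, hred] at hup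
  have hdesc_u : (cs).IsLeftDescent (racgGen G u * (racgGen G c * π ω)) u := by
    rw [CoxeterSystem.IsLeftDescent, coxeterSystem_simple, ← mul_assoc, racgGen_sq, one_mul, hup,
      hred]
    omega
  have hdesc_c : (cs).IsLeftDescent (racgGen G u * (racgGen G c * π ω)) c := by
    have hle := (cs).length_mul_le (π ω) ((cs).simple u)
    rw [(cs).length_simple, coxeterSystem_simple, hω.eq] at hle
    rw [CoxeterSystem.IsLeftDescent, coxeterSystem_simple, hup, hcomm.eq, ← mul_assoc,
      ← mul_assoc, racgGen_sq, one_mul]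
    omega
  have hadj := adj_of_isLeftDescent G hne hdesc_u hdesc_c
  refine ⟨hadj, fun hmem => hu ?_, ?_⟩
  · obtain ⟨τ, hτ, hτω, huτ⟩ := (mem_lettersOf_iff G).mp hmem
    refine (mem_lettersOf_iff G).mpr ⟨c :: τ, ?_, by rw [coxeterSystem_wordProd_cons, hτω],
      List.mem_cons_of_mem c huτ⟩
    rw [isReduced_cons_iff, hτω, hred, ← hτ.eq, hτω, hω.eq]
  · simpa [← mul_assoc, racgGen_sq] using (racgGen_commute G hadj).mul_right hcomm

lemma commute_of_forall_mem_lettersOf_adj {u : V} {w : RACG G}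
    (hu : ∀ s ∈ lettersOf G w, G.Adj u s) : Commute (racgGen G u) w := by
  obtain ⟨ω, hω, rfl⟩ := (cs).exists_isReduced w
  rw [coxeterSystem_wordProd]
  refine Commute.list_prod_right _ _ fun g hg => ?_
  obtain ⟨s, hs, rfl⟩ := List.mem_map.mp hg
  exact racgGen_commute G (hu s ((mem_lettersOf_iff G).mpr ⟨ω, hω, rfl, hs⟩))

lemma adj_of_mem_of_commute_of_not_mem_lettersOf {u : V} {ω : List V}
    (hred : (cs).IsReduced ω) (hu : u ∉ lettersOf G (π ω))
    (hcomm : Commute (racgGen G u) (π ω)) : ∀ s ∈ ω, G.Adj u s := by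
  induction ω with
  | nil => simp
  | cons c ω ih =>
    obtain ⟨hadj, hu', hcomm'⟩ := adj_of_commute_of_not_mem_lettersOf G hred hu hcomm
    simpa [hadj] using ih (by simpa using hred.drop 1) hu' hcomm'

end RACG

theorem racg_link_of_word_eq_commuting_generators_general
    {V : Type*} (G : SimpleGraph V) (w : RACG G) :
    linkSet G (lettersOf G w)
      = {u : V | u ∉ lettersOf G w ∧ racgGen G u * w = w * racgGen G u} := by
  ext u
  refine ⟨fun hu => ⟨fun h => G.irrefl (hu u h), RACG.commute_of_forall_mem_lettersOf_adj G hu⟩,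
    ?_⟩
  rintro ⟨hu, hcomm⟩ s hs
  obtain ⟨ω, hred, rfl, hsω⟩ := (RACG.mem_lettersOf_iff G).mp hs
  exact RACG.adj_of_mem_of_commute_of_not_mem_lettersOf G hred hu hcomm s hsω

/-- `Link(w)` (the link of the set of letters of `w`) is exactly the set of vertices
outside the letters of `w` whose generator commutes with `w`. -/
theorem racg_link_of_word_eq_commuting_generators
    {V : Type*} [Fintype V] (G : SimpleGraph V) (w : RACG G) :
    linkSet G (lettersOf G w)
      = {u : V | u ∉ lettersOf G w ∧ racgGen G u * w = w * racgGen G u} :=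
  racg_link_of_word_eq_commuting_generators_general G w
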